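/- arXiv:2504.05507 — 6 statements merged into one kernel-verified Lean document; each statement's English description precedes it below -/
import Mathlib

section
/- Let ρ be an ordered tolerance on a lattice L. Define the binary relation ξ on L by: x ξ y iff ρ (x ∧ y) (x ∨ y). Then ξ is a tolerance on L, ξ agrees with ρ on pairs of comparable elements (for x ≤ y, x ξ y iff ρ x y), and ξ is the unique tolerance on L whose restriction to pairs of comparable elements equals ρ. -/
/-!
An ordered tolerance is convex: if `ρ u v` and `u ≤ w ≤ v`, joining (meeting) with `ρ w w`
gives `ρ w v` (`ρ u w`). Joining `ρ (a ⊓ b) (a ⊔ b)` with `ρ (c ⊓ d) (c ⊔ d)` yields a pair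
enclosing `(a ⊔ c) ⊓ (b ⊔ d) ≤ (a ⊔ c) ⊔ (b ⊔ d)`, so convexity makes `ξ` compatible with
joins, and dually with meets. Conversely every tolerance satisfies
`ξ x y ↔ ξ (x ⊓ y) (x ⊔ y)`, so a tolerance is determined by its values on comparable pairs.
-/

def IsTolerance {L : Type u} [Lattice L] (ξ : L → L → Prop) : Prop :=
  (∀ x, ξ x x) ∧ (∀ x y, ξ x y → ξ y x) ∧
  (∀ a b c d, ξ a b → ξ c d → ξ (a ⊔ c) (b ⊔ d)) ∧
  (∀ a b c d, ξ a b → ξ c d → ξ (a ⊓ c) (b ⊓ d))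

def IsOrderedTolerance {L : Type u} [Lattice L] (ρ : L → L → Prop) : Prop :=
  (∀ x y, ρ x y → x ≤ y) ∧ (∀ x, ρ x x) ∧
  (∀ x x' y y', ρ x x' → ρ y y' → ρ (x ⊓ y) (x' ⊓ y')) ∧
  (∀ x x' y y', ρ x x' → ρ y y' → ρ (x ⊔ y) (x' ⊔ y'))

section

variable {L : Type u} [Lattice L]

def toleranceExtension (ρ : L → L → Prop) (x y : L) : Prop :=
  ρ (x ⊓ y) (x ⊔ y)

theorem toleranceExtension_iff_of_le (ρ : L → L → Prop) {x y : L} (hxy : x ≤ y) :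
    toleranceExtension ρ x y ↔ ρ x y := by
  rw [toleranceExtension, inf_eq_left.mpr hxy, sup_eq_right.mpr hxy]

namespace IsOrderedTolerance

variable {ρ : L → L → Prop} {u v w : L}

theorem rel_of_left_le (hρ : IsOrderedTolerance ρ) (h : ρ u v) (huw : u ≤ w) (hwv : w ≤ v) :
    ρ w v := by
  simpa [sup_eq_right.mpr huw, sup_eq_left.mpr hwv] using hρ.2.2.2 u v w w h (hρ.2.1 w)

theorem rel_of_le_right (hρ : IsOrderedTolerance ρ) (h : ρ u v) (huw : u ≤ w) (hwv : w ≤ v) :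
    ρ u w := by
  simpa [inf_eq_left.mpr huw, inf_eq_right.mpr hwv] using hρ.2.2.1 u v w w h (hρ.2.1 w)

theorem isTolerance_toleranceExtension (hρ : IsOrderedTolerance ρ) :
    IsTolerance (toleranceExtension ρ) := by
  refine ⟨fun x => ?refl, fun x y h => ?symm, fun a b c d hab hcd => ?sup,
    fun a b c d hab hcd => ?inf⟩
  case refl => simpa [toleranceExtension] using hρ.2.1 x
  case symm => rwa [toleranceExtension, inf_comm, sup_comm]
  case sup =>
    have hjoin := hρ.2.2.2 _ _ _ _ hab hcd
    rw [← sup_sup_sup_comm] at hjoin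
    exact hρ.rel_of_left_le hjoin
      (le_inf (sup_le_sup inf_le_left inf_le_left) (sup_le_sup inf_le_right inf_le_right))
      (inf_le_left.trans le_sup_left)
  case inf =>
    have hmeet := hρ.2.2.1 _ _ _ _ hab hcd
    rw [← inf_inf_inf_comm] at hmeet
    exact hρ.rel_of_le_right hmeet
      (inf_le_left.trans le_sup_left)
      (sup_le (inf_le_inf le_sup_left le_sup_left) (inf_le_inf le_sup_right le_sup_right))

end IsOrderedTolerance

namespace IsTolerance

variable {ξ : L → L → Prop}

theorem rel_iff_rel_inf_sup (hξ : IsTolerance ξ) (x y : L) : ξ x y ↔ ξ (x ⊓ y) (x ⊔ y) := by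
  obtain ⟨hrefl, hsymm, hsup, hinf⟩ := hξ
  constructor
  · intro h
    have hx : ξ (x ⊓ y) x := by
      simpa [inf_comm] using hsymm _ _ (hinf x x x y (hrefl x) h)
    have hy : ξ (x ⊓ y) y := by simpa using hinf x y y y h (hrefl y)
    simpa [sup_comm] using hsup _ _ _ _ hx hy
  · intro h
    have hx : ξ x (x ⊔ y) := by simpa using hsup _ _ x x h (hrefl x)
    have hy : ξ (x ⊔ y) y := hsymm _ _ (by simpa [inf_comm x y] using hsup _ _ y y h (hrefl y))
    simpa using hinf _ _ _ _ hx hy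

theorem eq_toleranceExtension (hξ : IsTolerance ξ) {ρ : L → L → Prop}
    (hagree : ∀ x y : L, x ≤ y → (ξ x y ↔ ρ x y)) : ξ = toleranceExtension ρ := by
  funext x y
  rw [hξ.rel_iff_rel_inf_sup, hagree _ _ (inf_le_left.trans le_sup_left)]
  rfl

end IsTolerance

end

theorem orderedTolerance_extends_uniquely {L : Type u} [Lattice L]
    (ρ : L → L → Prop) (hρ : IsOrderedTolerance ρ)
    (ξ : L → L → Prop) (hdef : ∀ x y, ξ x y ↔ ρ (x ⊓ y) (x ⊔ y)) :
    IsTolerance ξ ∧ (∀ x y : L, x ≤ y → (ξ x y ↔ ρ x y)) ∧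
      (∀ ξ' : L → L → Prop, IsTolerance ξ' →
        (∀ x y : L, x ≤ y → (ξ' x y ↔ ρ x y)) → ξ' = ξ) := by
  obtain rfl : ξ = toleranceExtension ρ := funext₂ fun x y => propext (hdef x y)
  exact ⟨hρ.isTolerance_toleranceExtension, fun _ _ => toleranceExtension_iff_of_le ρ,
    fun _ hξ' hagree => hξ'.eq_toleranceExtension hagree⟩
end

section
/- Let L be a finite lattice and let D be a down-set of L. Suppose that for any a, b ∈ L with a, b ∈ D, a ∧ b ⋖ a, and a ∧ b ⋖ b (where ⋖ denotes the covering relation), one has a ∨ b ∈ D. Then for all a, b ∈ D, a ∨ b ∈ D. -/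
/-!
Induct downwards on `a ⊓ b`. If `a` and `b` are incomparable, pick covers `a ⊓ b ⋖ a' ≤ a` and
`a ⊓ b ⋖ b' ≤ b`. Then `a' ⊓ b' = a ⊓ b`, so `a' ⊔ b' ∈ D` by hypothesis. The pair `(a, a' ⊔ b')`
has meet above `a'`, so induction gives `a ⊔ b' ∈ D`; the pair `(a ⊔ b', b)` has meet above `b'`,
so induction gives `a ⊔ b ∈ D`.
-/

theorem IsLowerSet.supClosed_of_sup_mem_of_covBy {L : Type*} [Lattice L] [IsStronglyAtomic L]
    [WellFoundedGT L] {D : Set L} (hD : IsLowerSet D)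
    (hcov : ∀ a ∈ D, ∀ b ∈ D, a ⊓ b ⋖ a → a ⊓ b ⋖ b → a ⊔ b ∈ D) : SupClosed D := by
  suffices ∀ m, ∀ a ∈ D, ∀ b ∈ D, a ⊓ b = m → a ⊔ b ∈ D from
    fun a ha b hb => this _ a ha b hb rfl
  intro m
  induction m using WellFoundedGT.induction with
  | _ m ih =>
    rintro a ha b hb rfl
    by_cases hab : a ≤ b
    · rwa [sup_eq_right.mpr hab]
    by_cases hba : b ≤ a
    · rwa [sup_eq_left.mpr hba]
    obtain ⟨a', hcov_a, ha'⟩ := exists_covBy_le_of_lt (inf_lt_left.mpr hab)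
    obtain ⟨b', hcov_b, hb'⟩ := exists_covBy_le_of_lt (inf_lt_right.mpr hba)
    have hinf : a' ⊓ b' = a ⊓ b :=
      le_antisymm (le_inf (inf_le_left.trans ha') (inf_le_right.trans hb'))
        (le_inf hcov_a.le hcov_b.le)
    have hc : a' ⊔ b' ∈ D :=
      hcov a' (hD ha' ha) b' (hD hb' hb) (hinf ▸ hcov_a) (hinf ▸ hcov_b)
    have hab' : a ⊔ b' ∈ D := by
      have := ih _ (hcov_a.lt.trans_le (le_inf ha' le_sup_left)) a ha _ hc rfl
      rwa [← sup_assoc, sup_eq_left.mpr ha'] at this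
    have := ih _ (hcov_b.lt.trans_le (le_inf le_sup_right hb')) _ hab' b hb rfl
    rwa [sup_assoc, sup_eq_right.mpr hb'] at this

theorem downSet_join_closed {L : Type u} [Lattice L] [Finite L] (D : Set L)
    (hdown : ∀ x ∈ D, ∀ y : L, y ≤ x → y ∈ D)
    (hcov : ∀ a ∈ D, ∀ b ∈ D, a ⊓ b ⋖ a → a ⊓ b ⋖ b → a ⊔ b ∈ D) :
    ∀ a ∈ D, ∀ b ∈ D, a ⊔ b ∈ D :=
  fun _ ha _ hb =>
    IsLowerSet.supClosed_of_sup_mem_of_covBy (fun x y hyx hx => hdown x hx y hyx) hcov ha hb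
end

section
/- Let L be a finite lattice and let U be an up-set of L. Suppose that for any a, b ∈ L with a, b ∈ U, a ⋖ a ∨ b, and b ⋖ a ∨ b (where ⋖ denotes the covering relation), one has a ∧ b ∈ U. Then for all a, b ∈ U, a ∧ b ∈ U. -/
/-! Induct on `a ⊔ b`. When `a` and `b` are incomparable, choose `a ≤ a' ⋖ a ⊔ b` and
`b ≤ b' ⋖ a ⊔ b`. Then `a' ⊔ b' = a ⊔ b`, so `a' ⊓ b' ∈ U` by the covering hypothesis, and two
meets of pairs with strictly smaller joins descend from it: `a ⊓ b' = a ⊓ (a' ⊓ b')` (join `≤ a'`)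
and `a ⊓ b = b ⊓ (a ⊓ b')` (join `≤ b'`). -/

section

variable {L : Type*} [Lattice L] {U : Set L}

theorem IsUpperSet.inf_mem_of_forall_sup_lt [IsStronglyCoatomic L] (hU : IsUpperSet U)
    (hcov : ∀ a ∈ U, ∀ b ∈ U, a ⋖ a ⊔ b → b ⋖ a ⊔ b → a ⊓ b ∈ U) {a b : L} (ha : a ∈ U)
    (hb : b ∈ U) (ih : ∀ x ∈ U, ∀ y ∈ U, x ⊔ y < a ⊔ b → x ⊓ y ∈ U) : a ⊓ b ∈ U := by
  rcases (le_sup_left : a ≤ a ⊔ b).eq_or_lt with hab | hlt_a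
  · rwa [inf_eq_right.2 (sup_eq_left.1 hab.symm)]
  rcases (le_sup_right : b ≤ a ⊔ b).eq_or_lt with hab | hlt_b
  · rwa [inf_eq_left.2 (sup_eq_right.1 hab.symm)]
  obtain ⟨a', haa', ha'⟩ := exists_le_covBy_of_lt hlt_a
  obtain ⟨b', hbb', hb'⟩ := exists_le_covBy_of_lt hlt_b
  have hsup : a' ⊔ b' = a ⊔ b := (sup_le ha'.le hb'.le).antisymm (sup_le_sup haa' hbb')
  have hinf' : a' ⊓ b' ∈ U :=
    hcov a' (hU haa' ha) b' (hU hbb' hb) (hsup ▸ ha') (hsup ▸ hb')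
  have hab' : a ⊓ b' ∈ U := by
    have := ih a ha _ hinf' ((sup_le haa' inf_le_left).trans_lt ha'.lt)
    rwa [← inf_assoc, inf_eq_left.2 haa'] at this
  have := ih b hb _ hab' ((sup_le hbb' inf_le_right).trans_lt hb'.lt)
  rwa [inf_left_comm, inf_eq_left.2 hbb'] at this

theorem IsUpperSet.inf_mem_of_covBy [WellFoundedLT L] [IsStronglyCoatomic L]
    (hU : IsUpperSet U) (hcov : ∀ a ∈ U, ∀ b ∈ U, a ⋖ a ⊔ b → b ⋖ a ⊔ b → a ⊓ b ∈ U)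
    {a b : L} (ha : a ∈ U) (hb : b ∈ U) : a ⊓ b ∈ U := by
  suffices ∀ s, ∀ a ∈ U, ∀ b ∈ U, a ⊔ b = s → a ⊓ b ∈ U from this _ a ha b hb rfl
  intro s
  induction s using WellFoundedLT.induction with
  | _ s ih =>
    rintro a ha b hb rfl
    exact hU.inf_mem_of_forall_sup_lt hcov ha hb fun x hx y hy hlt => ih _ hlt x hx y hy rfl

end

theorem upSet_meet_closed {L : Type u} [Lattice L] [Finite L] (U : Set L)
    (hup : ∀ x ∈ U, ∀ y : L, x ≤ y → y ∈ U)
    (hcov : ∀ a ∈ U, ∀ b ∈ U, a ⋖ a ⊔ b → b ⋖ a ⊔ b → a ⊓ b ∈ U) :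
    ∀ a ∈ U, ∀ b ∈ U, a ⊓ b ∈ U :=
  fun _ ha _ hb => IsUpperSet.inf_mem_of_covBy (fun x y hxy hx => hup x hx y hxy) hcov ha hb
end

section
/- Let S be a locally finite lattice (every interval [a, b] of S is finite), let (L_x)_{x ∈ S} be a family of sets, and let (Ω_{x,y})_{x ⋖ y in S} be a family of maps such that each Ω_{x,y} is a partial bijection from L_x to L_y and such that axiom (PS6⁻∧) holds: for any x, y ∈ S with x ∧ y ⋖ x and x ∧ y ⋖ y, there exist saturated chains x = x_0 ⋖ x_1 ⋖ ⋯ ⋖ x_n = x ∨ y and y = y_0 ⋖ y_1 ⋖ ⋯ ⋖ y_m = x ∨ y with Ω_{x_•} ∘ Ω_{x∧y,x} = Ω_{y_•} ∘ Ω_{x∧y,y}. Then for any two saturated chains x_0 ⋖ x_1 ⋖ ⋯ ⋖ x_n and y_0 ⋖ y_1 ⋖ ⋯ ⋖ y_m in S with x_0 = y_0 = a and x_n = y_m = b, one has Ω_{x_•} = Ω_{y_•}. -/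
/-- A partial bijection from `A` to `B`, modeled as a functional and injective
relation `R : A → B → Prop`.  Its domain is `rdom R` and its image is `rim R`. -/
def IsPartialBij {A : Type u} {B : Type v} (R : A → B → Prop) : Prop :=
  (∀ a b b', R a b → R a b' → b = b') ∧ (∀ a a' b, R a b → R a' b → a = a')

/-- The domain of a partial bijection (as a relation). -/
def rdom {A : Type u} {B : Type v} (R : A → B → Prop) : Set A := {a | ∃ b, R a b}

/-- The image of a partial bijection (as a relation). -/
def rim {A : Type u} {B : Type v} (R : A → B → Prop) : Set B := {b | ∃ a, R a b}

/-- A (nonempty) filter of a lattice: an up-set closed under meets. -/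
def IsLatFilter {A : Type u} [Lattice A] (F : Set A) : Prop :=
  F.Nonempty ∧ (∀ a ∈ F, ∀ b, a ≤ b → b ∈ F) ∧ (∀ a ∈ F, ∀ b ∈ F, a ⊓ b ∈ F)

/-- A (nonempty) ideal of a lattice: a down-set closed under joins. -/
def IsLatIdeal {A : Type u} [Lattice A] (I : Set A) : Prop :=
  I.Nonempty ∧ (∀ a ∈ I, ∀ b, b ≤ a → b ∈ I) ∧ (∀ a ∈ I, ∀ b ∈ I, a ⊔ b ∈ I)

/-- A relation between lattices preserves joins and meets; together with
`IsPartialBij` this says the relation is a lattice isomorphism from its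
domain onto its image. -/
def IsLatHomRel {A : Type u} {B : Type v} [Lattice A] [Lattice B]
    (R : A → B → Prop) : Prop :=
  (∀ a a' b b', R a b → R a' b' → R (a ⊔ a') (b ⊔ b')) ∧
  (∀ a a' b b', R a b → R a' b' → R (a ⊓ a') (b ⊓ b'))

/-- `ChainComp L Ω a b f` says there is a saturated chain
`a = x₀ ⋖ x₁ ⋖ ⋯ ⋖ xₙ = b` in `S` such that `f` is the composite
`Ω_{x_{n-1},x_n} ∘ ⋯ ∘ Ω_{x_0,x_1}` (the identity relation when `a = b`). -/
inductive ChainComp {S : Type u} [Lattice S] (L : S → Type v)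
    (Ω : ∀ x y : S, x ⋖ y → L x → L y → Prop) : ∀ a b : S, (L a → L b → Prop) → Prop
  | refl (a : S) : ChainComp L Ω a a (fun u v => u = v)
  | cons {a b c : S} (h : a ⋖ b) {f : L b → L c → Prop}
      (hf : ChainComp L Ω b c f) : ChainComp L Ω a c (Relation.Comp (Ω a b h) f)


lemma le_of_chainComp {S : Type u} [Lattice S] {L : S → Type v}
    {Ω : ∀ x y : S, x ⋖ y → L x → L y → Prop} {a b : S} {f : L a → L b → Prop}
    (h : ChainComp L Ω a b f) : a ≤ b := by
  induction h with
  | refl => exact le_rfl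
  | cons h _ ih => exact h.le.trans ih

lemma comp_eq_left {A : Type u} {B : Type v} (g : A → B → Prop) :
    Relation.Comp (fun u v : A => u = v) g = g := by
  funext x y
  simp [Relation.Comp]

lemma chainComp_append {S : Type u} [Lattice S] {L : S → Type v}
    {Ω : ∀ x y : S, x ⋖ y → L x → L y → Prop} {a b c : S}
    {f : L a → L b → Prop} {g : L b → L c → Prop}
    (hf : ChainComp L Ω a b f) (hg : ChainComp L Ω b c g) :
    ChainComp L Ω a c (Relation.Comp f g) := by
  induction hf with
  | refl a => rw [comp_eq_left]; exact hg
  | cons h hf ih => rw [Relation.comp_assoc]; exact ChainComp.cons h (ih hg)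

lemma chainComp_exists {S : Type u} [Lattice S]
    (hLF : ∀ a b : S, (Set.Icc a b).Finite)
    (L : S → Type v) (Ω : ∀ x y : S, x ⋖ y → L x → L y → Prop) :
    ∀ (n : ℕ) (u v : S), u ≤ v → (Set.Icc u v).ncard ≤ n →
      ∃ f, ChainComp L Ω u v f := by
  intro n
  induction n with
  | zero =>
    intro u v huv hcard
    have : 0 < (Set.Icc u v).ncard :=
      (Set.ncard_pos (hLF u v)).mpr ⟨u, Set.mem_Icc.mpr ⟨le_rfl, huv⟩⟩
    omega
  | succ n ih =>
    intro u v huv hcard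
    rcases eq_or_lt_of_le huv with rfl | hlt
    · exact ⟨_, ChainComp.refl u⟩
    · have hTfin : (Set.Ioc u v).Finite := (hLF u v).subset Set.Ioc_subset_Icc_self
      have hTne : (Set.Ioc u v).Nonempty := ⟨v, Set.mem_Ioc.mpr ⟨hlt, le_rfl⟩⟩
      obtain ⟨w, hw, hwmin⟩ : ∃ w ∈ Set.Ioc u v, ∀ z ∈ Set.Ioc u v, id z ≤ id w → id w = id z := by
        obtain ⟨w, hw⟩ := hTfin.exists_minimal hTne
        exact ⟨w, hw.prop, fun z hz hzw => le_antisymm (hw.le_of_le hz hzw) hzw⟩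
      obtain ⟨huw, hwv⟩ := Set.mem_Ioc.mp hw
      have hcov : u ⋖ w := by
        refine ⟨huw, fun z huz hzw => ?_⟩
        have hz : z ∈ Set.Ioc u v := Set.mem_Ioc.mpr ⟨huz, hzw.le.trans hwv⟩
        exact absurd (hwmin z hz hzw.le).symm (ne_of_lt hzw)
      have hsub : Set.Icc w v ⊂ Set.Icc u v := by
        refine ⟨Set.Icc_subset_Icc_left huw.le, fun hss => ?_⟩
        have := hss (Set.mem_Icc.mpr ⟨le_rfl, huv⟩)
        exact absurd (Set.mem_Icc.mp this).1 (not_le_of_gt huw)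
      have hlt' : (Set.Icc w v).ncard < (Set.Icc u v).ncard :=
        Set.ncard_lt_ncard hsub (hLF u v)
      obtain ⟨f, hf⟩ := ih w v hwv (by omega)
      exact ⟨_, ChainComp.cons hcov hf⟩

theorem chain_indep_meet {S : Type u} [Lattice S]
    (hLF : ∀ a b : S, (Set.Icc a b).Finite)
    (L : S → Type v) (Ω : ∀ x y : S, x ⋖ y → L x → L y → Prop)
    (hPB : ∀ x y : S, ∀ h : x ⋖ y, IsPartialBij (Ω x y h))
    (hPS6m : ∀ x y : S, ∀ (hx : x ⊓ y ⋖ x) (hy : x ⊓ y ⋖ y),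
      ∃ (f : L x → L (x ⊔ y) → Prop) (g : L y → L (x ⊔ y) → Prop),
        ChainComp L Ω x (x ⊔ y) f ∧ ChainComp L Ω y (x ⊔ y) g ∧
        Relation.Comp (Ω (x ⊓ y) x hx) f = Relation.Comp (Ω (x ⊓ y) y hy) g) :
    ∀ a b : S, ∀ f g : L a → L b → Prop,
      ChainComp L Ω a b f → ChainComp L Ω a b g → f = g := by
  suffices H : ∀ (n : ℕ) (a b : S) (f g : L a → L b → Prop), (Set.Icc a b).ncard ≤ n →
      ChainComp L Ω a b f → ChainComp L Ω a b g → f = g by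
    intro a b f g hf hg
    exact H _ a b f g le_rfl hf hg
  intro n
  induction n with
  | zero =>
    intro a b f g hcard hf hg
    have : 0 < (Set.Icc a b).ncard :=
      (Set.ncard_pos (hLF a b)).mpr ⟨a, Set.mem_Icc.mpr ⟨le_rfl, le_of_chainComp hf⟩⟩
    omega
  | succ n ih =>
    intro a b f g hcard hf hg
    have subcard : ∀ x : S, a ⋖ x → x ≤ b → (Set.Icc x b).ncard ≤ n := by
      intro x hax hxb
      have hsub : Set.Icc x b ⊂ Set.Icc a b := by
        refine ⟨Set.Icc_subset_Icc_left hax.le, fun hss => ?_⟩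
        have := hss (Set.mem_Icc.mpr ⟨le_rfl, hax.le.trans hxb⟩)
        exact absurd (Set.mem_Icc.mp this).1 (not_le_of_gt hax.lt)
      have := Set.ncard_lt_ncard hsub (hLF a b)
      omega
    cases hf with
    | refl =>
      cases hg with
      | refl => rfl
      | cons h hg' =>
        exact absurd (h.lt.trans_le (le_of_chainComp hg')) (lt_irrefl a)
    | cons hax hf' =>
      rename_i x f'
      cases hg with
      | refl =>
        exact absurd (hax.lt.trans_le (le_of_chainComp hf')) (lt_irrefl a)
      | cons hay hg' =>
        rename_i y g'
        have hxb : x ≤ b := le_of_chainComp hf'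
        have hyb : y ≤ b := le_of_chainComp hg'
        by_cases hxy : x = y
        · subst hxy
          rw [ih x b f' g' (subcard x hax hxb) hf' hg']
        · have hmeet : x ⊓ y = a := by
            rcases hax.eq_or_eq (le_inf hax.le hay.le) inf_le_left with h1 | h1
            · exact h1
            · exfalso
              have hxy2 : x ≤ y := by
                have := inf_le_right (a := x) (b := y)
                rw [h1] at this; exact this
              rcases hay.eq_or_eq hax.le hxy2 with h2 | h2
              · exact absurd h2.symm (ne_of_lt hax.lt)
              · exact hxy h2
          subst hmeet
          obtain ⟨p, q, hp, hq, heq⟩ := hPS6m x y hax hay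
          have hjb : x ⊔ y ≤ b := sup_le hxb hyb
          obtain ⟨r, hr⟩ := chainComp_exists hLF L Ω _ (x ⊔ y) b hjb le_rfl
          have hf'eq : f' = Relation.Comp p r :=
            ih x b f' _ (subcard x hax hxb) hf' (chainComp_append hp hr)
          have hg'eq : g' = Relation.Comp q r :=
            ih y b g' _ (subcard y hay hyb) hg' (chainComp_append hq hr)
          rw [hf'eq, hg'eq, ← Relation.comp_assoc, ← Relation.comp_assoc, heq]
end

section
/- Let S be a locally finite lattice (every interval [a, b] of S is finite), let (L_x)_{x ∈ S} be a family of sets, and let (Ω_{x,y})_{x ⋖ y in S} be a family of maps such that each Ω_{x,y} is a partial bijection from L_x to L_y and such that axiom (PS6⁻∨) holds: for any x, y ∈ S with x ⋖ x ∨ y and y ⋖ x ∨ y, there exist saturated chains x ∧ y = x_0 ⋖ x_1 ⋖ ⋯ ⋖ x_n = x and x ∧ y = y_0 ⋖ y_1 ⋖ ⋯ ⋖ y_m = y with Ω_{x,x∨y} ∘ Ω_{x_•} = Ω_{y,x∨y} ∘ Ω_{y_•}. Then for any two saturated chains x_0 ⋖ x_1 ⋖ ⋯ ⋖ x_n and y_0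 ⋖ y_1 ⋖ ⋯ ⋖ y_m in S with x_0 = y_0 = a and x_n = y_m = b, one has Ω_{x_•} = Ω_{y_•}. -/
section
variable {S : Type u} [Lattice S] {L : S → Type v} {Ω : ∀ x y : S, x ⋖ y → L x → L y → Prop}

lemma chain_le {a b : S} {f : L a → L b → Prop} (h : ChainComp L Ω a b f) : a ≤ b := by
  induction h with
  | refl => exact le_rfl
  | cons h _ ih => exact h.le.trans ih

lemma chain_self {a : S} {f : L a → L a → Prop} (h : ChainComp L Ω a a f) :
    f = fun u v => u = v := by
  cases h with
  | refl => rfl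
  | cons h hf => exact absurd (chain_le hf) h.lt.not_ge

lemma chain_append {a b c : S} {f : L a → L b → Prop} {g : L b → L c → Prop}
    (hf : ChainComp L Ω a b f) (hg : ChainComp L Ω b c g) :
    ChainComp L Ω a c (Relation.Comp f g) := by
  induction hf with
  | refl => rw [Relation.eq_comp]; exact hg
  | cons h _ ih => rw [Relation.comp_assoc]; exact ChainComp.cons h (ih hg)

lemma exists_chain (hLF : ∀ a b : S, (Set.Icc a b).Finite) :
    ∀ n : ℕ, ∀ a b : S, (Set.Icc a b).ncard ≤ n → a ≤ b →
      ∃ f, ChainComp L Ω a b f := by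
  intro n
  induction n with
  | zero =>
    intro a b hn hab
    have : a ∈ Set.Icc a b := ⟨le_rfl, hab⟩
    have := Set.ncard_pos (hLF a b) |>.mpr ⟨a, this⟩
    omega
  | succ n ih =>
    intro a b hn hab
    rcases eq_or_lt_of_le hab with rfl | hab
    · exact ⟨_, ChainComp.refl a⟩
    · have hne : {z : S | a < z ∧ z ≤ b}.Nonempty := ⟨b, hab, le_rfl⟩
      have hfin : {z : S | a < z ∧ z ≤ b}.Finite :=
        (hLF a b).subset (fun z hz => ⟨hz.1.le, hz.2⟩)
      obtain ⟨x, hx, hmin⟩ := Set.Finite.exists_minimalFor id _ hfin hne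
      have hcov : a ⋖ x := by
        refine ⟨hx.1, fun z haz hzx => ?_⟩
        exact absurd (hmin (j := z) ⟨haz, hzx.le.trans hx.2⟩ hzx.le) (by simpa using hzx.not_ge)
      have hsub : Set.Icc x b ⊂ Set.Icc a b := by
        constructor
        · exact fun z hz => ⟨hcov.le.trans hz.1, hz.2⟩
        · intro hsub'
          exact absurd (hsub' ⟨le_rfl, hab.le⟩).1 hcov.lt.not_ge
      have hcard : (Set.Icc x b).ncard ≤ n := by
        have := Set.ncard_lt_ncard hsub (hLF a b); omega
      obtain ⟨f, hf⟩ := ih x b hcard hx.2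
      exact ⟨_, ChainComp.cons hcov hf⟩

lemma exists_coatom (hLF : ∀ a b : S, (Set.Icc a b).Finite) {x w : S} (h : x < w) :
    ∃ s, x ≤ s ∧ s ⋖ w := by
  have hne : {z : S | x ≤ z ∧ z < w}.Nonempty := ⟨x, le_rfl, h⟩
  have hfin : {z : S | x ≤ z ∧ z < w}.Finite :=
    (hLF x w).subset (fun z hz => ⟨hz.1, hz.2.le⟩)
  obtain ⟨s, hs, hmax⟩ := Set.Finite.exists_maximalFor id _ hfin hne
  refine ⟨s, hs.1, hs.2, fun z hsz hzw => ?_⟩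
  exact absurd (hmax (j := z) ⟨hs.1.trans hsz.le, hzw⟩ hsz.le) (by simpa using hsz.not_ge)

end

theorem chain_indep_join {S : Type u} [Lattice S]
    (hLF : ∀ a b : S, (Set.Icc a b).Finite)
    (L : S → Type v) (Ω : ∀ x y : S, x ⋖ y → L x → L y → Prop)
    (hPB : ∀ x y : S, ∀ h : x ⋖ y, IsPartialBij (Ω x y h))
    (hPS6j : ∀ x y : S, ∀ (hx : x ⋖ x ⊔ y) (hy : y ⋖ x ⊔ y),
      ∃ (f : L (x ⊓ y) → L x → Prop) (g : L (x ⊓ y) → L y → Prop),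
        ChainComp L Ω (x ⊓ y) x f ∧ ChainComp L Ω (x ⊓ y) y g ∧
        Relation.Comp f (Ω x (x ⊔ y) hx) = Relation.Comp g (Ω y (x ⊔ y) hy)) :
    ∀ a b : S, ∀ f g : L a → L b → Prop,
      ChainComp L Ω a b f → ChainComp L Ω a b g → f = g := by
  suffices H : ∀ n : ℕ, ∀ a b : S, (Set.Icc a b).ncard ≤ n →
      ∀ f g : L a → L b → Prop, ChainComp L Ω a b f → ChainComp L Ω a b g → f = g by
    intro a b f g hf hg
    exact H (Set.Icc a b).ncard a b le_rfl f g hf hg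
  intro n
  induction n using Nat.strong_induction_on with
  | _ n ih =>
  intro a b hn f g hf hg
  have IH : ∀ a' b' : S, Set.Icc a' b' ⊂ Set.Icc a b →
      ∀ f g : L a' → L b' → Prop, ChainComp L Ω a' b' f → ChainComp L Ω a' b' g → f = g := by
    intro a' b' hsub
    exact ih _ (lt_of_lt_of_le (Set.ncard_lt_ncard hsub (hLF a b)) hn) a' b' le_rfl
  cases hf with
  | refl => exact (chain_self hg).symm
  | @cons _ x _ hax f' hf' =>
    cases hg with
    | refl => exact absurd (chain_le hf') hax.lt.not_ge
    | @cons _ y _ hay g' hg' =>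
      have hxb : x ≤ b := chain_le hf'
      have hyb : y ≤ b := chain_le hg'
      have hab : a ≤ b := hax.le.trans hxb
      by_cases hxy : x = y
      · subst hxy
        have : f' = g' := by
          refine IH x b ⟨fun z hz => ⟨hax.le.trans hz.1, hz.2⟩, fun hs => ?_⟩ f' g' hf' hg'
          exact absurd (hs ⟨le_rfl, hab⟩).1 hax.lt.not_ge
        rw [this]
      · -- x ≠ y : go through the join
        have hyx : ¬ y ≤ x := fun h =>
          hax.2 hay.lt (lt_of_le_of_ne h fun e => hxy e.symm)
        have hxy' : ¬ x ≤ y := fun h => hay.2 hax.lt (lt_of_le_of_ne h hxy)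
        have hxj : x < x ⊔ y := lt_of_le_of_ne le_sup_left fun h => hyx (h ▸ le_sup_right)
        have hyj : y < x ⊔ y := lt_of_le_of_ne le_sup_right fun h => hxy' (h ▸ le_sup_left)
        obtain ⟨s, hxs, hsj⟩ := exists_coatom hLF hxj
        obtain ⟨t, hyt, htj⟩ := exists_coatom hLF hyj
        have hst_ne : s ≠ t := fun h => hsj.lt.not_ge (sup_le hxs (h ▸ hyt))
        have hst : s ⊔ t = x ⊔ y :=
          le_antisymm (sup_le hsj.le htj.le)
            (sup_le (hxs.trans le_sup_left) (hyt.trans le_sup_right))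
        rw [← hst] at hsj htj
        obtain ⟨F, G, hF, hG, hFG⟩ := hPS6j s t hsj htj
        have hjb : s ⊔ t ≤ b := by rw [hst]; exact sup_le hxb hyb
        have hsb : s ≤ b := hsj.le.trans hjb
        have htb : t ≤ b := htj.le.trans hjb
        have hap : a ≤ s ⊓ t := le_inf (hax.le.trans hxs) (hay.le.trans hyt)
        obtain ⟨c0, hc0⟩ := exists_chain (L := L) (Ω := Ω) hLF _ a (s ⊓ t) le_rfl hap
        obtain ⟨c1, hc1⟩ := exists_chain (L := L) (Ω := Ω) hLF _ x s le_rfl hxs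
        obtain ⟨c1', hc1'⟩ := exists_chain (L := L) (Ω := Ω) hLF _ y t le_rfl hyt
        obtain ⟨c2, hc2⟩ := exists_chain (L := L) (Ω := Ω) hLF _ (s ⊔ t) b le_rfl hjb
        have hbs : ¬ b ≤ s := fun h => (hsj.lt.trans_le hjb).not_ge h
        have hbt : ¬ b ≤ t := fun h => (htj.lt.trans_le hjb).not_ge h
        have key1 : f' = Relation.Comp c1 (Relation.Comp (Ω s (s ⊔ t) hsj) c2) := by
          refine IH x b ⟨fun z hz => ⟨hax.le.trans hz.1, hz.2⟩, fun hs' => ?_⟩ f' _ hf'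
            (chain_append hc1 (ChainComp.cons hsj hc2))
          exact absurd (hs' ⟨le_rfl, hab⟩).1 hax.lt.not_ge
        have key1' : g' = Relation.Comp c1' (Relation.Comp (Ω t (s ⊔ t) htj) c2) := by
          refine IH y b ⟨fun z hz => ⟨hay.le.trans hz.1, hz.2⟩, fun hs' => ?_⟩ g' _ hg'
            (chain_append hc1' (ChainComp.cons htj hc2))
          exact absurd (hs' ⟨le_rfl, hab⟩).1 hay.lt.not_ge
        have key2 : Relation.Comp (Ω a x hax) c1 = Relation.Comp c0 F := by
          refine IH a s ⟨fun z hz => ⟨hz.1, hz.2.trans hsb⟩, fun hs' => ?_⟩ _ _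
            (ChainComp.cons hax hc1) (chain_append hc0 hF)
          exact absurd (hs' ⟨hab, le_rfl⟩).2 hbs
        have key2' : Relation.Comp (Ω a y hay) c1' = Relation.Comp c0 G := by
          refine IH a t ⟨fun z hz => ⟨hz.1, hz.2.trans htb⟩, fun hs' => ?_⟩ _ _
            (ChainComp.cons hay hc1') (chain_append hc0 hG)
          exact absurd (hs' ⟨hab, le_rfl⟩).2 hbt
        have eL : Relation.Comp (Ω a x hax) f' =
            Relation.Comp c0 (Relation.Comp F (Relation.Comp (Ω s (s ⊔ t) hsj) c2)) := by
          rw [key1]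
          simp only [← Relation.comp_assoc]
          rw [key2]
        have eR : Relation.Comp (Ω a y hay) g' =
            Relation.Comp c0 (Relation.Comp G (Relation.Comp (Ω t (s ⊔ t) htj) c2)) := by
          rw [key1']
          simp only [← Relation.comp_assoc]
          rw [key2']
        have hFG' : Relation.Comp F (Relation.Comp (Ω s (s ⊔ t) hsj) c2) =
            Relation.Comp G (Relation.Comp (Ω t (s ⊔ t) htj) c2) := by
          rw [← Relation.comp_assoc, ← Relation.comp_assoc, hFG]
        rw [eL, eR, hFG']
end

section
/- In a system (S, (L_x), (Ω_{x,y})) satisfying the minimal axioms, for any x, y ∈ S, Φ_{x∧y,y} ∘ Φ_{x∧y,x}⁻¹ = Φ_{y,x∨y}⁻¹ ∘ Φ_{x,x∨y} as partial bijections from L_x to L_y. -/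
/-- The minimal axioms for a polytone system `(S, (L x), Ω)`:
(PS1⁻) `S` is l.f.f.c.; (PS2⁻) the blocks are finite, modular, complemented;
(PS3⁻) each connection `Ω x y h` (for a cover `x ⋖ y`) is a partial bijection
whose domain is a filter, whose image is an ideal, and which is a lattice
isomorphism; (PS6⁻∧), (PS7⁻∧), (PS8⁻∨) as in the paper. -/
def MinimalAxioms {S : Type u} [Lattice S] (L : S → Type v)
    [∀ x, Lattice (L x)] [∀ x, BoundedOrder (L x)]
    (Ω : ∀ x y : S, x ⋖ y → L x → L y → Prop) : Prop :=
  -- (PS1⁻) S is l.f.f.c.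
  (∀ a b : S, (Set.Icc a b).Finite) ∧
  (∀ a : S, {b | a ⋖ b}.Finite) ∧
  (∀ a : S, {b | b ⋖ a}.Finite) ∧
  -- (PS2⁻) blocks are f.m.c.
  (∀ x, Finite (L x)) ∧
  (∀ x, IsModularLattice (L x)) ∧
  (∀ x, ComplementedLattice (L x)) ∧
  -- (PS3⁻)
  (∀ x y : S, ∀ h : x ⋖ y, IsPartialBij (Ω x y h) ∧ IsLatFilter (rdom (Ω x y h)) ∧
    IsLatIdeal (rim (Ω x y h)) ∧ IsLatHomRel (Ω x y h)) ∧
  -- (PS6⁻∧)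
  (∀ x y : S, ∀ (hx : x ⊓ y ⋖ x) (hy : x ⊓ y ⋖ y),
    ∃ (f : L x → L (x ⊔ y) → Prop) (g : L y → L (x ⊔ y) → Prop),
      ChainComp L Ω x (x ⊔ y) f ∧ ChainComp L Ω y (x ⊔ y) g ∧
      Relation.Comp (Ω (x ⊓ y) x hx) f = Relation.Comp (Ω (x ⊓ y) y hy) g) ∧
  -- (PS7⁻∧)
  (∀ x y : S, ∀ (hx : x ⊓ y ⋖ x) (hy : x ⊓ y ⋖ y),
    ∃ h : L (x ⊓ y) → L (x ⊔ y) → Prop, ChainComp L Ω (x ⊓ y) (x ⊔ y) h ∧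
      rdom (Ω (x ⊓ y) x hx) ∩ rdom (Ω (x ⊓ y) y hy) ⊆ rdom h) ∧
  -- (PS8⁻∨)
  (∀ x y : S, ∀ (hx : x ⋖ x ⊔ y) (hy : y ⋖ x ⊔ y),
    ∃ h : L (x ⊓ y) → L (x ⊔ y) → Prop, ChainComp L Ω (x ⊓ y) (x ⊔ y) h ∧
      rim (Ω x (x ⊔ y) hx) ∩ rim (Ω y (x ⊔ y) hy) ⊆ rim h)

section
universe u v
variable {S : Type u} [Lattice S] {L : S → Type v}
  {Ω : ∀ x y : S, x ⋖ y → L x → L y → Prop}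

lemma chainComp_le {a b : S} {f : L a → L b → Prop} (hf : ChainComp L Ω a b f) : a ≤ b := by
  induction hf with
  | refl a => exact le_rfl
  | cons h _ ih => exact h.le.trans ih

lemma chainComp_comp : ∀ {a b : S} {f : L a → L b → Prop}, ChainComp L Ω a b f →
    ∀ {c : S} {g : L b → L c → Prop}, ChainComp L Ω b c g →
    ChainComp L Ω a c (Relation.Comp f g) := by
  intro a b f hf
  induction hf with
  | refl a => intro c g hg; rwa [Relation.eq_comp]
  | cons h hf ih =>
      intro c g hg
      rw [Relation.comp_assoc]
      exact ChainComp.cons h (ih hg)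

lemma chainComp_self {a : S} {f : L a → L a → Prop} (hf : ChainComp L Ω a a f) :
    f = (fun u v => u = v) := by
  cases hf with
  | refl => rfl
  | cons h hf => exact absurd (chainComp_le hf) h.lt.not_ge

lemma isPartialBij_comp {A B C} {r : A → B → Prop} {s : B → C → Prop}
    (hr : IsPartialBij r) (hs : IsPartialBij s) : IsPartialBij (Relation.Comp r s) := by
  constructor
  · rintro a c c' ⟨b, hab, hbc⟩ ⟨b', hab', hbc'⟩
    cases hr.1 _ _ _ hab hab'; exact hs.1 _ _ _ hbc hbc'
  · rintro a a' c ⟨b, hab, hbc⟩ ⟨b', hab', hbc'⟩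
    cases hs.2 _ _ _ hbc hbc'; exact hr.2 _ _ _ hab hab'

variable (hfin : ∀ a b : S, (Set.Icc a b).Finite)
include hfin

lemma exists_cover_le {a b : S} (hab : a < b) : ∃ c : S, a ⋖ c ∧ c ≤ b := by
  have hs : ({z : S | a < z ∧ z ≤ b}).Finite :=
    (hfin a b).subset (fun z hz => ⟨hz.1.le, hz.2⟩)
  obtain ⟨c, hcb, hc⟩ := hs.exists_le_minimal (a := b) ⟨hab, le_rfl⟩
  refine ⟨c, ⟨hc.prop.1, fun t hat htc => ?_⟩, hc.prop.2⟩
  exact htc.not_ge (hc.le_of_le ⟨hat, htc.le.trans hc.prop.2⟩ htc.le)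

lemma exists_le_cover {a b : S} (hab : a < b) : ∃ c : S, a ≤ c ∧ c ⋖ b := by
  have hs : ({z : S | a ≤ z ∧ z < b}).Finite :=
    (hfin a b).subset (fun z hz => ⟨hz.1, hz.2.le⟩)
  obtain ⟨c, hca, hc⟩ := hs.exists_le_maximal (a := a) ⟨le_rfl, hab⟩
  refine ⟨c, hc.prop.1, ⟨hc.prop.2, fun t hct htb => ?_⟩⟩
  exact hct.not_ge (hc.le_of_ge ⟨hc.prop.1.trans hct.le, htb⟩ hct.le)

omit hfin in
lemma icc_ssubset_left {a b c : S} (hac : a < c) (hcb : c ≤ b) :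
    Set.Icc c b ⊂ Set.Icc a b := by
  constructor
  · exact fun z hz => ⟨hac.le.trans hz.1, hz.2⟩
  · intro hsub
    exact hac.not_ge (hsub ⟨le_rfl, hac.le.trans hcb⟩).1

omit hfin in
lemma icc_ssubset_right {a b c : S} (hac : a ≤ c) (hcb : c < b) :
    Set.Icc a c ⊂ Set.Icc a b := by
  constructor
  · exact fun z hz => ⟨hz.1, hz.2.trans hcb.le⟩
  · intro hsub
    exact hcb.not_ge (hsub ⟨hac.trans hcb.le, le_rfl⟩).2

lemma chainComp_exists_aux : ∀ n : ℕ, ∀ a b : S, (Set.Icc a b).ncard ≤ n → a ≤ b →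
    ∃ f, ChainComp L Ω a b f := by
  intro n
  induction n with
  | zero =>
      intro a b hn hab
      have : 0 < (Set.Icc a b).ncard :=
        (Set.ncard_pos (hfin a b)).mpr ⟨a, le_rfl, hab⟩
      omega
  | succ n ih =>
      intro a b hn hab
      rcases eq_or_lt_of_le hab with rfl | hab
      · exact ⟨_, ChainComp.refl a⟩
      · obtain ⟨c, hac, hcb⟩ := exists_cover_le hfin hab
        have hlt : (Set.Icc c b).ncard < (Set.Icc a b).ncard :=
          Set.ncard_lt_ncard (icc_ssubset_left hac.lt hcb) (hfin a b)
        obtain ⟨f, hf⟩ := ih c b (by omega) hcb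
        exact ⟨_, ChainComp.cons hac hf⟩

lemma chainComp_exists_s13 {a b : S} (hab : a ≤ b) : ∃ f, ChainComp L Ω a b f :=
  chainComp_exists_aux hfin _ a b le_rfl hab

variable [∀ x, Lattice (L x)] [∀ x, BoundedOrder (L x)]

set_option linter.unusedSectionVars false

omit hfin in
lemma meet_eq_of_covers {a x₁ x₂ : S} (h : a ⋖ x₁) (h₂ : a ⋖ x₂) (hx : x₁ ≠ x₂) :
    x₁ ⊓ x₂ = a := by
  rcases h.eq_or_eq (le_inf h.le h₂.le) inf_le_left with e | e
  · exact e
  · have hle : x₁ ≤ x₂ := by rw [← e]; exact inf_le_right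
    rcases h₂.eq_or_eq h.le hle with e2 | e2
    · exact absurd e2 h.lt.ne'
    · exact absurd e2 hx

omit hfin in
lemma chainComp_bij {a b : S} {f : L a → L b → Prop}
    (hPS3 : ∀ x y : S, ∀ h : x ⋖ y, IsPartialBij (Ω x y h))
    (hf : ChainComp L Ω a b f) : IsPartialBij f := by
  induction hf with
  | refl a => exact ⟨fun a b b' h h' => h ▸ h', fun a a' b h h' => h.trans h'.symm⟩
  | cons h hf ih => exact isPartialBij_comp (hPS3 _ _ h) ih

variable (hPS6 : ∀ x y : S, ∀ (hx : x ⊓ y ⋖ x) (hy : x ⊓ y ⋖ y),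
    ∃ (f : L x → L (x ⊔ y) → Prop) (g : L y → L (x ⊔ y) → Prop),
      ChainComp L Ω x (x ⊔ y) f ∧ ChainComp L Ω y (x ⊔ y) g ∧
      Relation.Comp (Ω (x ⊓ y) x hx) f = Relation.Comp (Ω (x ⊓ y) y hy) g)
include hPS6

lemma chainComp_unique_aux : ∀ n : ℕ, ∀ a b : S, (Set.Icc a b).ncard ≤ n →
    ∀ f g : L a → L b → Prop, ChainComp L Ω a b f → ChainComp L Ω a b g → f = g := by
  intro n
  induction n with
  | zero =>
      intro a b hn f g hf hg
      have : 0 < (Set.Icc a b).ncard :=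
        (Set.ncard_pos (hfin a b)).mpr ⟨a, le_rfl, chainComp_le hf⟩
      omega
  | succ n ih =>
      intro a b hn f g hf hg
      cases hf with
      | refl => exact (chainComp_self hg).symm
      | @cons _ x₁ _ h f' hf' =>
        cases hg with
        | refl => exact absurd (chainComp_le hf') h.lt.not_ge
        | @cons _ x₂ _ h₂ g' hg' =>
          by_cases hx : x₁ = x₂
          · subst hx
            have hcard : (Set.Icc x₁ b).ncard ≤ n := by
              have := Set.ncard_lt_ncard (icc_ssubset_left h.lt (chainComp_le hf')) (hfin a b)
              omega
            have : f' = g' := ih x₁ b hcard f' g' hf' hg'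
            subst this
            rfl
          · have e : x₁ ⊓ x₂ = a := meet_eq_of_covers h h₂ hx
            subst e
            obtain ⟨F, G, hF, hG, hcomm⟩ := hPS6 x₁ x₂ h h₂
            have hpb : x₁ ⊔ x₂ ≤ b := sup_le (chainComp_le hf') (chainComp_le hg')
            obtain ⟨H, hH⟩ := chainComp_exists_s13 hfin hpb
            have hc1 : (Set.Icc x₁ b).ncard ≤ n := by
              have := Set.ncard_lt_ncard (icc_ssubset_left h.lt (chainComp_le hf'))
                (hfin (x₁ ⊓ x₂) b)
              omega
            have hc2 : (Set.Icc x₂ b).ncard ≤ n := by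
              have := Set.ncard_lt_ncard (icc_ssubset_left h₂.lt (chainComp_le hg'))
                (hfin (x₁ ⊓ x₂) b)
              omega
            have e1 : f' = Relation.Comp F H :=
              ih x₁ b hc1 _ _ hf' (chainComp_comp hF hH)
            have e2 : g' = Relation.Comp G H :=
              ih x₂ b hc2 _ _ hg' (chainComp_comp hG hH)
            rw [e1, e2, ← Relation.comp_assoc, ← Relation.comp_assoc, hcomm]

lemma chainComp_unique {a b : S} {f g : L a → L b → Prop}
    (hf : ChainComp L Ω a b f) (hg : ChainComp L Ω a b g) : f = g :=
  chainComp_unique_aux hfin hPS6 _ a b le_rfl f g hf hg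

omit hfin hPS6 in
lemma icc_ssubset_of {a b a' b' : S} (h1 : a ≤ a') (h2 : b' ≤ b) (hab : a ≤ b)
    (h3 : ¬ a' ≤ a) : Set.Icc a' b' ⊂ Set.Icc a b := by
  constructor
  · exact fun z hz => ⟨h1.trans hz.1, hz.2.trans h2⟩
  · intro hs; exact h3 (hs ⟨le_rfl, hab⟩).1

variable (hPS3bij : ∀ x y : S, ∀ h : x ⋖ y, IsPartialBij (Ω x y h))
variable (hPS7 : ∀ x y : S, ∀ (hx : x ⊓ y ⋖ x) (hy : x ⊓ y ⋖ y),
    ∃ h : L (x ⊓ y) → L (x ⊔ y) → Prop, ChainComp L Ω (x ⊓ y) (x ⊔ y) h ∧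
      rdom (Ω (x ⊓ y) x hx) ∩ rdom (Ω (x ⊓ y) y hy) ⊆ rdom h)
include hPS3bij hPS7

lemma ps7gen : ∀ n : ℕ, ∀ x y m j : S, x ⊓ y = m → x ⊔ y = j →
    (Set.Icc m j).ncard ≤ n →
    ∀ (f : L m → L x → Prop) (g : L m → L y → Prop) (h : L m → L j → Prop),
    ChainComp L Ω m x f → ChainComp L Ω m y g → ChainComp L Ω m j h →
    rdom f ∩ rdom g ⊆ rdom h := by
  intro n
  induction n with
  | zero =>
      intro x y m j hm hj hn f g h hf hg hh
      have : 0 < (Set.Icc m j).ncard :=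
        (Set.ncard_pos (hfin m j)).mpr ⟨m, le_rfl, (chainComp_le hf).trans (hj ▸ le_sup_left)⟩
      omega
  | succ n ih =>
      intro x y m j hm hj hn f g h hf hg hh a ha
      obtain ⟨⟨ax, hax⟩, ay, hay⟩ := ha
      by_cases hxy : x ≤ y
      · have em : m = x := by rw [← hm, inf_eq_left.mpr hxy]
        subst em
        have ej : j = y := by rw [← hj, sup_eq_right.mpr hxy]
        subst ej
        rw [chainComp_unique hfin hPS6 hh hg]
        exact ⟨ay, hay⟩
      · by_cases hyx : y ≤ x
        · have em : m = y := by rw [← hm, inf_eq_right.mpr hyx]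
          subst em
          have ej : j = x := by rw [← hj, sup_eq_left.mpr hyx]
          subst ej
          rw [chainComp_unique hfin hPS6 hh hf]
          exact ⟨ax, hax⟩
        · -- main case
          have hmx : m < x := lt_of_le_of_ne (hm ▸ inf_le_left)
            (fun e => hxy (by rw [← e, ← hm]; exact inf_le_right))
          have hmy : m < y := lt_of_le_of_ne (hm ▸ inf_le_right)
            (fun e => hyx (by rw [← e, ← hm]; exact inf_le_left))
          obtain ⟨x₁, hmx₁, hx₁x⟩ := exists_cover_le hfin hmx
          obtain ⟨y₁, hmy₁, hy₁y⟩ := exists_cover_le hfin hmy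
          have hne : x₁ ≠ y₁ := by
            intro e
            exact hmx₁.lt.not_ge (hm ▸ le_inf hx₁x (e ▸ hy₁y))
          have e : x₁ ⊓ y₁ = m := meet_eq_of_covers hmx₁ hmy₁ hne
          subst e
          have hxj : x ≤ j := hj ▸ le_sup_left
          have hyj : y ≤ j := hj ▸ le_sup_right
          obtain ⟨h₀, hh₀, hdom₀⟩ := hPS7 x₁ y₁ hmx₁ hmy₁
          -- decompose f and g through the covers
          obtain ⟨f', hf'⟩ := chainComp_exists_s13 hfin hx₁x
          have ef : f = Relation.Comp (Ω (x₁ ⊓ y₁) x₁ hmx₁) f' :=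
            chainComp_unique hfin hPS6 hf (ChainComp.cons hmx₁ hf')
          obtain ⟨g', hg'⟩ := chainComp_exists_s13 hfin hy₁y
          have eg : g = Relation.Comp (Ω (x₁ ⊓ y₁) y₁ hmy₁) g' :=
            chainComp_unique hfin hPS6 hg (ChainComp.cons hmy₁ hg')
          rw [ef] at hax
          obtain ⟨b, hab, hbx⟩ := hax
          rw [eg] at hay
          obtain ⟨b₂, hab₂, hb₂y⟩ := hay
          obtain ⟨u, hau⟩ := hdom₀ ⟨⟨b, hab⟩, ⟨b₂, hab₂⟩⟩
          -- decompose h₀ through x₁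
          obtain ⟨t, ht⟩ := chainComp_exists_s13 (Ω := Ω) hfin (le_sup_left : x₁ ≤ x₁ ⊔ y₁)
          have eh₀ : h₀ = Relation.Comp (Ω (x₁ ⊓ y₁) x₁ hmx₁) t :=
            chainComp_unique hfin hPS6 hh₀ (ChainComp.cons hmx₁ ht)
          rw [eh₀] at hau
          obtain ⟨b', hab', hb'u⟩ := hau
          have ebb : b' = b := (hPS3bij _ _ hmx₁).1 _ _ _ hab' hab
          rw [ebb] at hb'u
          -- q := x ⊓ (x₁ ⊔ y₁)
          have hx₁q : x₁ ≤ x ⊓ (x₁ ⊔ y₁) := le_inf hx₁x le_sup_left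
          obtain ⟨t₁, ht₁⟩ := chainComp_exists_s13 (Ω := Ω) hfin hx₁q
          obtain ⟨t₂, ht₂⟩ := chainComp_exists_s13 (Ω := Ω) hfin
            (inf_le_right : x ⊓ (x₁ ⊔ y₁) ≤ x₁ ⊔ y₁)
          have et : t = Relation.Comp t₁ t₂ :=
            chainComp_unique hfin hPS6 ht (chainComp_comp ht₁ ht₂)
          rw [et] at hb'u
          obtain ⟨c, hbc, hcu⟩ := hb'u
          obtain ⟨t₃, ht₃⟩ := chainComp_exists_s13 (Ω := Ω) hfin
            (inf_le_left : x ⊓ (x₁ ⊔ y₁) ≤ x)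
          have ef' : f' = Relation.Comp t₁ t₃ :=
            chainComp_unique hfin hPS6 hf' (chainComp_comp ht₁ ht₃)
          rw [ef'] at hbx
          obtain ⟨c', hbc', hc'x⟩ := hbx
          have ecc : c' = c := (chainComp_bij hPS3bij ht₁).1 _ _ _ hbc' hbc
          rw [ecc] at hc'x
          -- IH call 1 on (x, x₁ ⊔ y₁)
          obtain ⟨t₄, ht₄⟩ := chainComp_exists_s13 (Ω := Ω) hfin
            (inf_le_left.trans le_sup_left : x ⊓ (x₁ ⊔ y₁) ≤ x ⊔ (x₁ ⊔ y₁))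
          have hcard1 : (Set.Icc (x ⊓ (x₁ ⊔ y₁)) (x ⊔ (x₁ ⊔ y₁))).ncard ≤ n := by
            have hsub : Set.Icc (x ⊓ (x₁ ⊔ y₁)) (x ⊔ (x₁ ⊔ y₁)) ⊂ Set.Icc (x₁ ⊓ y₁) j :=
              icc_ssubset_of (hmx₁.le.trans hx₁q)
                (sup_le hxj (sup_le (hx₁x.trans hxj) (hy₁y.trans hyj)))
                ((hmx₁.le.trans hx₁x).trans hxj)
                (fun hle => hmx₁.lt.not_ge (hx₁q.trans hle))
            have := Set.ncard_lt_ncard hsub (hfin (x₁ ⊓ y₁) j)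
            omega
          obtain ⟨u', hcu'⟩ := ih x (x₁ ⊔ y₁) _ _ rfl rfl hcard1 t₃ t₂ t₄ ht₃ ht₂ ht₄
            ⟨⟨ax, hc'x⟩, ⟨u, hcu⟩⟩
          -- r := (x ⊔ (x₁ ⊔ y₁)) ⊓ y
          have hy₁r : y₁ ≤ (x ⊔ (x₁ ⊔ y₁)) ⊓ y :=
            le_inf (le_sup_right.trans le_sup_right) hy₁y
          have hmr : x₁ ⊓ y₁ ≤ (x ⊔ (x₁ ⊔ y₁)) ⊓ y := (hmy₁.le.trans hy₁r)
          obtain ⟨s₁, hs₁⟩ := chainComp_exists_s13 (Ω := Ω) hfin hmr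
          obtain ⟨s₂, hs₂⟩ := chainComp_exists_s13 (Ω := Ω) hfin
            (inf_le_left : (x ⊔ (x₁ ⊔ y₁)) ⊓ y ≤ x ⊔ (x₁ ⊔ y₁))
          obtain ⟨s₃, hs₃⟩ := chainComp_exists_s13 (Ω := Ω) hfin
            (inf_le_right : (x ⊔ (x₁ ⊔ y₁)) ⊓ y ≤ y)
          obtain ⟨s₄, hs₄⟩ := chainComp_exists_s13 (Ω := Ω) hfin
            (inf_le_right.trans hyj : (x ⊔ (x₁ ⊔ y₁)) ⊓ y ≤ j)
          -- K := Ω ∘ t₁ ∘ t₄ : ChainComp m (x ⊔ (x₁ ⊔ y₁))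
          have hK : ChainComp L Ω (x₁ ⊓ y₁) (x ⊔ (x₁ ⊔ y₁))
              (Relation.Comp (Ω (x₁ ⊓ y₁) x₁ hmx₁) (Relation.Comp t₁ t₄)) :=
            ChainComp.cons hmx₁ (chainComp_comp ht₁ ht₄)
          have eK : Relation.Comp (Ω (x₁ ⊓ y₁) x₁ hmx₁) (Relation.Comp t₁ t₄)
              = Relation.Comp s₁ s₂ :=
            chainComp_unique hfin hPS6 hK (chainComp_comp hs₁ hs₂)
          have hKa : Relation.Comp s₁ s₂ a u' := by
            rw [← eK]; exact ⟨b, hab, c, hbc, hcu'⟩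
          obtain ⟨d, had, hdu'⟩ := hKa
          -- g through r
          have eg2 : g = Relation.Comp s₁ s₃ :=
            chainComp_unique hfin hPS6 hg (chainComp_comp hs₁ hs₃)
          have hga : Relation.Comp s₁ s₃ a ay := by rw [← eg2, eg]; exact ⟨b₂, hab₂, hb₂y⟩
          obtain ⟨d', had', hd'y⟩ := hga
          have edd : d' = d := (chainComp_bij hPS3bij hs₁).1 _ _ _ had' had
          rw [edd] at hd'y
          -- IH call 2 on (x ⊔ (x₁ ⊔ y₁), y)
          have ej2 : (x ⊔ (x₁ ⊔ y₁)) ⊔ y = j := by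
            apply le_antisymm
            · exact sup_le (sup_le hxj (sup_le (hx₁x.trans hxj) (hy₁y.trans hyj))) hyj
            · rw [← hj]; exact sup_le (le_sup_left.trans le_sup_left) le_sup_right
          have hcard2 : (Set.Icc ((x ⊔ (x₁ ⊔ y₁)) ⊓ y) j).ncard ≤ n := by
            have hsub : Set.Icc ((x ⊔ (x₁ ⊔ y₁)) ⊓ y) j ⊂ Set.Icc (x₁ ⊓ y₁) j :=
              icc_ssubset_of hmr le_rfl ((hmx₁.le.trans hx₁x).trans hxj)
                (fun hle => hmy₁.lt.not_ge (hy₁r.trans hle))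
            have := Set.ncard_lt_ncard hsub (hfin (x₁ ⊓ y₁) j)
            omega
          obtain ⟨w, hdw⟩ := ih (x ⊔ (x₁ ⊔ y₁)) y _ _ rfl ej2 hcard2 s₂ s₃ s₄ hs₂ hs₃ hs₄
            ⟨⟨u', hdu'⟩, ⟨ay, hd'y⟩⟩
          -- conclude
          have eh : h = Relation.Comp s₁ s₄ :=
            chainComp_unique hfin hPS6 hh (chainComp_comp hs₁ hs₄)
          exact ⟨w, by rw [eh]; exact ⟨d, had, hdw⟩⟩

omit hfin hPS6 hPS3bij hPS7 in
lemma join_eq_of_covers {b x₁ x₂ : S} (h : x₁ ⋖ b) (h₂ : x₂ ⋖ b) (hx : x₁ ≠ x₂) :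
    x₁ ⊔ x₂ = b := by
  rcases h.eq_or_eq (le_sup_left : x₁ ≤ x₁ ⊔ x₂) (sup_le h.le h₂.le) with e | e
  · have hle : x₂ ≤ x₁ := by rw [← e]; exact le_sup_right
    rcases h₂.eq_or_eq hle h.le with e2 | e2
    · exact absurd e2 hx
    · exact absurd e2 h.lt.ne
  · exact e

omit hfin hPS6 hPS3bij hPS7 in
lemma chainComp_single {a b : S} (h : a ⋖ b) : ChainComp L Ω a b (Ω a b h) := by
  have := ChainComp.cons (L := L) (Ω := Ω) h (ChainComp.refl b)
  rwa [Relation.comp_eq] at this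

omit hfin hPS6 hPS3bij hPS7 in
lemma icc_ssubset_of' {a b a' b' : S} (h1 : a ≤ a') (h2 : b' ≤ b) (hab : a ≤ b)
    (h3 : ¬ b ≤ b') : Set.Icc a' b' ⊂ Set.Icc a b := by
  constructor
  · exact fun z hz => ⟨h1.trans hz.1, hz.2.trans h2⟩
  · intro hs; exact h3 (hs ⟨hab, le_rfl⟩).2

omit hPS7 in
lemma ps8gen
    (hPS8 : ∀ x y : S, ∀ (hx : x ⋖ x ⊔ y) (hy : y ⋖ x ⊔ y),
      ∃ h : L (x ⊓ y) → L (x ⊔ y) → Prop, ChainComp L Ω (x ⊓ y) (x ⊔ y) h ∧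
        rim (Ω x (x ⊔ y) hx) ∩ rim (Ω y (x ⊔ y) hy) ⊆ rim h) :
    ∀ n : ℕ, ∀ x y m j : S, x ⊓ y = m → x ⊔ y = j →
    (Set.Icc m j).ncard ≤ n →
    ∀ (f : L x → L j → Prop) (g : L y → L j → Prop) (h : L m → L j → Prop),
    ChainComp L Ω x j f → ChainComp L Ω y j g → ChainComp L Ω m j h →
    rim f ∩ rim g ⊆ rim h := by
  intro n
  induction n with
  | zero =>
      intro x y m j hm hj hn f g h hf hg hh
      have : 0 < (Set.Icc m j).ncard :=
        (Set.ncard_pos (hfin m j)).mpr ⟨m, le_rfl, chainComp_le hh⟩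
      omega
  | succ n ih =>
      intro x y m j hm hj hn f g h hf hg hh b hb
      obtain ⟨⟨bx, hbx⟩, by', hby⟩ := hb
      by_cases hxy : x ≤ y
      · have em : m = x := by rw [← hm, inf_eq_left.mpr hxy]
        subst em
        have ej : j = y := by rw [← hj, sup_eq_right.mpr hxy]
        subst ej
        rw [chainComp_unique hfin hPS6 hh hf]
        exact ⟨bx, hbx⟩
      · by_cases hyx : y ≤ x
        · have em : m = y := by rw [← hm, inf_eq_right.mpr hyx]
          subst em
          have ej : j = x := by rw [← hj, sup_eq_left.mpr hyx]
          subst ej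
          rw [chainComp_unique hfin hPS6 hh hg]
          exact ⟨by', hby⟩
        · -- main case
          have hxj : x < j := lt_of_le_of_ne (hj ▸ le_sup_left)
            (fun e => hyx (by rw [e, ← hj]; exact le_sup_right))
          have hyj : y < j := lt_of_le_of_ne (hj ▸ le_sup_right)
            (fun e => hxy (by rw [e, ← hj]; exact le_sup_left))
          have hmx : m ≤ x := hm ▸ inf_le_left
          have hmy : m ≤ y := hm ▸ inf_le_right
          obtain ⟨x₁, hxx₁, hx₁j⟩ := exists_le_cover hfin hxj
          obtain ⟨y₁, hyy₁, hy₁j⟩ := exists_le_cover hfin hyj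
          have hne : x₁ ≠ y₁ := by
            intro e
            exact hx₁j.lt.not_ge (hj ▸ sup_le hxx₁ (e ▸ hyy₁))
          have e : x₁ ⊔ y₁ = j := join_eq_of_covers hx₁j hy₁j hne
          subst e
          obtain ⟨h₀, hh₀, him₀⟩ := hPS8 x₁ y₁ hx₁j hy₁j
          -- decompose f and g through the covers
          obtain ⟨f', hf'⟩ := chainComp_exists_s13 (Ω := Ω) hfin hxx₁
          have ef : f = Relation.Comp f' (Ω x₁ (x₁ ⊔ y₁) hx₁j) :=
            chainComp_unique hfin hPS6 hf (chainComp_comp hf' (chainComp_single hx₁j))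
          obtain ⟨g', hg'⟩ := chainComp_exists_s13 (Ω := Ω) hfin hyy₁
          have eg : g = Relation.Comp g' (Ω y₁ (x₁ ⊔ y₁) hy₁j) :=
            chainComp_unique hfin hPS6 hg (chainComp_comp hg' (chainComp_single hy₁j))
          rw [ef] at hbx
          obtain ⟨v', hf'v, hΩv'⟩ := hbx
          rw [eg] at hby
          obtain ⟨v₂, hg'v, hΩv₂⟩ := hby
          obtain ⟨u, hu⟩ := him₀ ⟨⟨v', hΩv'⟩, ⟨v₂, hΩv₂⟩⟩
          -- decompose h₀ through x₁
          obtain ⟨t, ht⟩ := chainComp_exists_s13 (Ω := Ω) hfin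
            (inf_le_left : x₁ ⊓ y₁ ≤ x₁)
          have eh₀ : h₀ = Relation.Comp t (Ω x₁ (x₁ ⊔ y₁) hx₁j) :=
            chainComp_unique hfin hPS6 hh₀ (chainComp_comp ht (chainComp_single hx₁j))
          rw [eh₀] at hu
          obtain ⟨v, htv, hΩv⟩ := hu
          have evv : v' = v := (hPS3bij _ _ hx₁j).2 _ _ _ hΩv' hΩv
          rw [evv] at hf'v
          -- q' := x ⊔ (x₁ ⊓ y₁)
          have hq'x₁ : x ⊔ (x₁ ⊓ y₁) ≤ x₁ := sup_le hxx₁ inf_le_left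
          obtain ⟨t₁, ht₁⟩ := chainComp_exists_s13 (Ω := Ω) hfin
            (le_sup_right : x₁ ⊓ y₁ ≤ x ⊔ (x₁ ⊓ y₁))
          obtain ⟨t₂, ht₂⟩ := chainComp_exists_s13 (Ω := Ω) hfin hq'x₁
          have et : t = Relation.Comp t₁ t₂ :=
            chainComp_unique hfin hPS6 ht (chainComp_comp ht₁ ht₂)
          rw [et] at htv
          obtain ⟨c, ht₁c, ht₂c⟩ := htv
          obtain ⟨t₃, ht₃⟩ := chainComp_exists_s13 (Ω := Ω) hfin
            (le_sup_left : x ≤ x ⊔ (x₁ ⊓ y₁))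
          have ef' : f' = Relation.Comp t₃ t₂ :=
            chainComp_unique hfin hPS6 hf' (chainComp_comp ht₃ ht₂)
          rw [ef'] at hf'v
          obtain ⟨c', ht₃c, ht₂c'⟩ := hf'v
          have ecc : c' = c := (chainComp_bij hPS3bij ht₂).2 _ _ _ ht₂c' ht₂c
          rw [ecc] at ht₃c
          -- IH call 1 on (x, x₁ ⊓ y₁)
          obtain ⟨t₅, ht₅⟩ := chainComp_exists_s13 (Ω := Ω) hfin
            (inf_le_left.trans le_sup_left : x ⊓ (x₁ ⊓ y₁) ≤ x ⊔ (x₁ ⊓ y₁))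
          have hcard1 : (Set.Icc (x ⊓ (x₁ ⊓ y₁)) (x ⊔ (x₁ ⊓ y₁))).ncard ≤ n := by
            have hmp : m ≤ x₁ ⊓ y₁ := le_inf (hmx.trans hxx₁) (hmy.trans hyy₁)
            have hsub : Set.Icc (x ⊓ (x₁ ⊓ y₁)) (x ⊔ (x₁ ⊓ y₁)) ⊂ Set.Icc m (x₁ ⊔ y₁) :=
              icc_ssubset_of' (le_inf hmx hmp) (hq'x₁.trans hx₁j.le)
                (hmx.trans (hxx₁.trans hx₁j.le))
                (fun hle => hx₁j.lt.not_ge (hle.trans hq'x₁))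
            have := Set.ncard_lt_ncard hsub (hfin m (x₁ ⊔ y₁))
            omega
          obtain ⟨w, ht₅w⟩ := ih x (x₁ ⊓ y₁) _ _ rfl rfl hcard1 t₃ t₁ t₅ ht₃ ht₁ ht₅
            ⟨⟨bx, ht₃c⟩, ⟨u, ht₁c⟩⟩
          -- composite chain from x ⊓ (x₁ ⊓ y₁) to j
          have hK : ChainComp L Ω (x ⊓ (x₁ ⊓ y₁)) (x₁ ⊔ y₁)
              (Relation.Comp t₅ (Relation.Comp t₂ (Ω x₁ (x₁ ⊔ y₁) hx₁j))) :=
            chainComp_comp ht₅ (chainComp_comp ht₂ (chainComp_single hx₁j))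
          -- r' := (x ⊓ (x₁ ⊓ y₁)) ⊔ y
          have hr'j : (x ⊓ (x₁ ⊓ y₁)) ⊔ y ≤ x₁ ⊔ y₁ :=
            sup_le (inf_le_left.trans (hxx₁.trans hx₁j.le)) (hyy₁.trans hy₁j.le)
          obtain ⟨s₁, hs₁⟩ := chainComp_exists_s13 (Ω := Ω) hfin
            (le_sup_left : x ⊓ (x₁ ⊓ y₁) ≤ (x ⊓ (x₁ ⊓ y₁)) ⊔ y)
          obtain ⟨s₂, hs₂⟩ := chainComp_exists_s13 (Ω := Ω) hfin hr'j
          obtain ⟨s₃, hs₃⟩ := chainComp_exists_s13 (Ω := Ω) hfin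
            (le_sup_right : y ≤ (x ⊓ (x₁ ⊓ y₁)) ⊔ y)
          have eK : Relation.Comp t₅ (Relation.Comp t₂ (Ω x₁ (x₁ ⊔ y₁) hx₁j))
              = Relation.Comp s₁ s₂ :=
            chainComp_unique hfin hPS6 hK (chainComp_comp hs₁ hs₂)
          have hKb : Relation.Comp s₁ s₂ w b := by
            rw [← eK]; exact ⟨c, ht₅w, v, ht₂c, hΩv⟩
          obtain ⟨d, hs₁d, hs₂d⟩ := hKb
          -- g through r'
          have eg2 : g = Relation.Comp s₃ s₂ :=
            chainComp_unique hfin hPS6 hg (chainComp_comp hs₃ hs₂)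
          have hgb : Relation.Comp s₃ s₂ by' b := by
            rw [← eg2, eg]; exact ⟨v₂, hg'v, hΩv₂⟩
          obtain ⟨d', hs₃d, hs₂d'⟩ := hgb
          have edd : d' = d := (chainComp_bij hPS3bij hs₂).2 _ _ _ hs₂d' hs₂d
          rw [edd] at hs₃d
          -- IH call 2 on (x ⊓ (x₁ ⊓ y₁), y)
          have em2 : (x ⊓ (x₁ ⊓ y₁)) ⊓ y = m := by
            apply le_antisymm
            · rw [← hm]; exact le_inf (inf_le_left.trans inf_le_left) inf_le_right
            · exact le_inf (le_inf hmx (le_inf (hmx.trans hxx₁) (hmy.trans hyy₁))) hmy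
          have hcard2 : (Set.Icc m ((x ⊓ (x₁ ⊓ y₁)) ⊔ y)).ncard ≤ n := by
            have hr'y₁ : (x ⊓ (x₁ ⊓ y₁)) ⊔ y ≤ y₁ :=
              sup_le (inf_le_right.trans inf_le_right) hyy₁
            have hsub : Set.Icc m ((x ⊓ (x₁ ⊓ y₁)) ⊔ y) ⊂ Set.Icc m (x₁ ⊔ y₁) :=
              icc_ssubset_of' le_rfl (hr'y₁.trans hy₁j.le) (hmx.trans (hxx₁.trans hx₁j.le))
                (fun hle => hy₁j.lt.not_ge (hle.trans hr'y₁))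
            have := Set.ncard_lt_ncard hsub (hfin m (x₁ ⊔ y₁))
            omega
          obtain ⟨s₅, hs₅⟩ := chainComp_exists_s13 (Ω := Ω) hfin
            (hmy.trans le_sup_right : m ≤ (x ⊓ (x₁ ⊓ y₁)) ⊔ y)
          obtain ⟨a₀, hs₅a⟩ := ih (x ⊓ (x₁ ⊓ y₁)) y _ _ em2 rfl hcard2 s₁ s₃ s₅ hs₁ hs₃ hs₅
            ⟨⟨w, hs₁d⟩, ⟨by', hs₃d⟩⟩
          -- conclude
          have eh : h = Relation.Comp s₅ s₂ :=
            chainComp_unique hfin hPS6 hh (chainComp_comp hs₅ hs₂)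
          exact ⟨a₀, by rw [eh]; exact ⟨d, hs₅a, hs₂d⟩⟩

end

theorem im_dom_converse {S : Type u} [Lattice S] (L : S → Type v)
    [∀ x, Lattice (L x)] [∀ x, BoundedOrder (L x)]
    (Ω : ∀ x y : S, x ⋖ y → L x → L y → Prop)
    (hmin : MinimalAxioms L Ω)
    (Φ : ∀ x y : S, x ≤ y → (L x → L y → Prop))
    (hΦ : ∀ x y : S, ∀ h : x ≤ y, ChainComp L Ω x y (Φ x y h)) :
    ∀ x y : S,
      Relation.Comp (flip (Φ (x ⊓ y) x inf_le_left)) (Φ (x ⊓ y) y inf_le_right) =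
        Relation.Comp (Φ x (x ⊔ y) le_sup_left) (flip (Φ y (x ⊔ y) le_sup_right)) := by
  obtain ⟨hfin, -, -, -, -, -, hPS3, hPS6, hPS7, hPS8⟩ := hmin
  have hPS3bij : ∀ x y : S, ∀ h : x ⋖ y, IsPartialBij (Ω x y h) :=
    fun x y h => (hPS3 x y h).1
  intro x y
  have hF := hΦ (x ⊓ y) x inf_le_left
  have hG := hΦ (x ⊓ y) y inf_le_right
  have hP := hΦ x (x ⊔ y) le_sup_left
  have hQ := hΦ y (x ⊔ y) le_sup_right
  have hFP : ChainComp L Ω (x ⊓ y) (x ⊔ y)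
      (Relation.Comp (Φ (x ⊓ y) x inf_le_left) (Φ x (x ⊔ y) le_sup_left)) :=
    chainComp_comp hF hP
  have hGQ : ChainComp L Ω (x ⊓ y) (x ⊔ y)
      (Relation.Comp (Φ (x ⊓ y) y inf_le_right) (Φ y (x ⊔ y) le_sup_right)) :=
    chainComp_comp hG hQ
  have hH := chainComp_unique hfin hPS6 hFP hGQ
  funext c b
  apply propext
  constructor
  · rintro ⟨a, haF, haG⟩
    obtain ⟨d, hd⟩ := ps7gen hfin hPS6 hPS3bij hPS7 (Set.Icc (x ⊓ y) (x ⊔ y)).ncard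
      x y _ _ rfl rfl le_rfl _ _ _ hF hG hFP ⟨⟨c, haF⟩, ⟨b, haG⟩⟩
    obtain ⟨c', hFc', hPd⟩ := hd
    have ecc : c' = c := (chainComp_bij hPS3bij hF).1 _ _ _ hFc' haF
    rw [ecc] at hPd
    have hd2 : Relation.Comp (Φ (x ⊓ y) y inf_le_right) (Φ y (x ⊔ y) le_sup_right) a d := by
      rw [← hH]; exact ⟨c, haF, hPd⟩
    obtain ⟨b', hGb', hQd⟩ := hd2
    have ebb : b' = b := (chainComp_bij hPS3bij hG).1 _ _ _ hGb' haG
    rw [ebb] at hQd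
    exact ⟨d, hPd, hQd⟩
  · rintro ⟨d, hPd, hQd⟩
    obtain ⟨a, haH⟩ := ps8gen hfin hPS6 hPS3bij hPS8 (Set.Icc (x ⊓ y) (x ⊔ y)).ncard
      x y _ _ rfl rfl le_rfl _ _ _ hP hQ hFP ⟨⟨c, hPd⟩, ⟨b, hQd⟩⟩
    obtain ⟨c', hFc, hPc'⟩ := haH
    have ecc : c' = c := (chainComp_bij hPS3bij hP).2 _ _ _ hPc' hPd
    rw [ecc] at hFc
    have h2 : Relation.Comp (Φ (x ⊓ y) y inf_le_right) (Φ y (x ⊔ y) le_sup_right) a d := by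
      rw [← hH]; exact ⟨c, hFc, hPd⟩
    obtain ⟨b', hGb, hQb'⟩ := h2
    have ebb : b' = b := (chainComp_bij hPS3bij hQ).2 _ _ _ hQb' hQd
    rw [ebb] at hGb
    exact ⟨a, hFc, hGb⟩
end
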